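/- Let u_κ solve the penalized problem ∫_ω (∂_{αβ}u_κ)(∂_{αβ}v) dy − (1/κ)∫_ω {u_κ−θ}⁻ v dy = ∫_ω f v dy for all v ∈ H²₀(ω). Then ‖u_κ‖_{H²₀(ω)} ≤ c_P² ‖f‖_{L²(ω)} and ‖{u_κ−θ}⁻‖_{L²(ω)} ≤ c_P ‖f‖_{L²(ω)} √κ, where c_P is the Poincaré–Friedrichs constant for fourth-order operators; in particular the family {u_κ} is bounded in H²₀(ω) uniformly in κ. -/

import Mathlib

/-!
Test the penalized equation with `v = u`. Since `θ < 0`, the penalty term satisfies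
`{u - θ}⁻ u ≤ -({u - θ}⁻)²` pointwise, so `|u|² + ‖{u - θ}⁻‖² / κ ≤ ∫ f u ≤ ‖f‖ ‖u‖`.
The Poincaré–Friedrichs inequality `‖u‖ ≤ c_P |u|` bounds the first term below by
`‖u‖² / c_P²`, which gives `‖u‖ ≤ c_P² ‖f‖`, and then `‖{u - θ}⁻‖² ≤ κ ‖f‖ ‖u‖ ≤ κ c_P² ‖f‖²`.
-/

noncomputable section
open MeasureTheory Real

abbrev E2 := EuclideanSpace ℝ (Fin 2)

def pd (i : Fin 2) (f : E2 → ℝ) (x : E2) : ℝ :=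
  fderiv ℝ f x (EuclideanSpace.single i 1)

def pd2 (i j : Fin 2) (f : E2 → ℝ) : E2 → ℝ :=
  pd i (fun x => pd j f x)

def negPartF (f : E2 → ℝ) : E2 → ℝ := fun y => -min (f y) 0

lemma neg_min_sub_zero_le_abs {a t : ℝ} (ht : t ≤ 0) : |-min (a - t) 0| ≤ |a| := by
  rcases le_total (a - t) 0 with h | h
  · rw [min_eq_left h, abs_of_nonneg (by linarith), abs_of_nonpos (by linarith)]
    linarith
  · simp [min_eq_right h]

lemma neg_min_sub_zero_mul_le {a t : ℝ} (ht : t ≤ 0) :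
    -min (a - t) 0 * a ≤ -(-min (a - t) 0) ^ 2 := by
  rcases le_total (a - t) 0 with h | h
  · rw [min_eq_left h]
    nlinarith
  · simp [min_eq_right h]

section L2

variable {α : Type*} [MeasurableSpace α] {μ : Measure α} {f g : α → ℝ}

lemma integral_mul_eq_inner_toLp (hf : MemLp f 2 μ) (hg : MemLp g 2 μ) :
    ∫ y, f y * g y ∂μ = inner ℝ (hf.toLp f) (hg.toLp g) := by
  rw [L2.inner_def]
  refine integral_congr_ae ?_
  filter_upwards [hf.coeFn_toLp, hg.coeFn_toLp] with y hfy hgy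
  simp [hfy, hgy, mul_comm]

lemma sqrt_integral_sq_eq_norm_toLp (hf : MemLp f 2 μ) :
    √(∫ y, f y ^ 2 ∂μ) = ‖hf.toLp f‖ := by
  simp_rw [sq, integral_mul_eq_inner_toLp hf hf, real_inner_self_eq_norm_mul_norm]
  exact sqrt_mul_self (norm_nonneg _)

lemma integral_mul_le_sqrt_mul_sqrt (hf : MemLp f 2 μ) (hg : MemLp g 2 μ) :
    ∫ y, f y * g y ∂μ ≤ √(∫ y, f y ^ 2 ∂μ) * √(∫ y, g y ^ 2 ∂μ) := by
  rw [integral_mul_eq_inner_toLp hf hg, sqrt_integral_sq_eq_norm_toLp hf,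
    sqrt_integral_sq_eq_norm_toLp hg]
  exact real_inner_le_norm _ _

variable {w θ : α → ℝ}

lemma MeasureTheory.MemLp.neg_min_sub_zero (hw : MemLp w 2 μ) (hθ : AEStronglyMeasurable θ μ)
    (hθ0 : ∀ᵐ y ∂μ, θ y ≤ 0) : MemLp (fun y => -min (w y - θ y) 0) 2 μ := by
  refine hw.of_le ((hw.aestronglyMeasurable.sub hθ).inf aestronglyMeasurable_const).neg ?_
  filter_upwards [hθ0] with y hy
  exact neg_min_sub_zero_le_abs hy

lemma integral_neg_min_sub_zero_mul_le (hw : MemLp w 2 μ) (hθ : AEStronglyMeasurable θ μ)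
    (hθ0 : ∀ᵐ y ∂μ, θ y ≤ 0) :
    ∫ y, -min (w y - θ y) 0 * w y ∂μ ≤ -∫ y, (-min (w y - θ y) 0) ^ 2 ∂μ := by
  have hn := hw.neg_min_sub_zero hθ hθ0
  rw [← integral_neg]
  refine integral_mono_ae (hn.integrable_mul hw) hn.integrable_sq.neg ?_
  filter_upwards [hθ0] with y hy
  exact neg_min_sub_zero_mul_le hy

end L2

lemma le_and_sqrt_le_of_energy_le {x A N F c κ : ℝ} (hx : 0 ≤ x) (hA : 0 ≤ A) (hN : 0 ≤ N)
    (hF : 0 ≤ F) (hc : 0 < c) (hκ : 0 < κ) (hxA : x ≤ c * √A)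
    (henergy : A + N / κ ≤ F * x) :
    x ≤ c ^ 2 * F ∧ √N ≤ c * F * √κ := by
  have hNκ : 0 ≤ N / κ := div_nonneg hN hκ.le
  have hx2 : x ^ 2 ≤ c ^ 2 * F * x :=
    calc x ^ 2 ≤ (c * √A) ^ 2 := pow_le_pow_left₀ hx hxA 2
      _ = c ^ 2 * A := by rw [mul_pow, sq_sqrt hA]
      _ ≤ c ^ 2 * F * x := by nlinarith
  have hxF : x ≤ c ^ 2 * F := by
    rcases hx.eq_or_lt with rfl | hpos
    · positivity
    · nlinarith
  refine ⟨hxF, ?_⟩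
  have hNF : N ≤ (c * F * √κ) ^ 2 :=
    calc N = κ * (N / κ) := by field_simp
      _ ≤ κ * (F * (c ^ 2 * F)) := by gcongr; nlinarith
      _ = (c * F * √κ) ^ 2 := by rw [mul_pow, sq_sqrt hκ.le]; ring
  exact (sqrt_le_left (by positivity)).2 hNF

theorem stmt_6_general
    (ω : Set E2) (hω : IsOpen ω)
    (H : Type*) [NormedAddCommGroup H] [InnerProductSpace ℝ H]
    (ι : H →ₗ[ℝ] (E2 → ℝ))
    (hL2 : ∀ v : H, MemLp (ι v) 2 (volume.restrict ω))
    (hL2le : ∀ v : H, Real.sqrt (∫ y in ω, (ι v y) ^ 2) ≤ ‖v‖)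
    (cP : ℝ) (hcP : 0 < cP)
    (hPF : ∀ v : H, ‖v‖ ≤ cP *
      Real.sqrt (∫ y in ω, ∑ α : Fin 2, ∑ β : Fin 2, (pd2 α β (ι v) y) ^ 2))
    (θ : E2 → ℝ) (hθ : ContinuousOn θ (closure ω)) (hθneg : ∀ y ∈ closure ω, θ y < 0)
    (f : E2 → ℝ) (hf : MemLp f 2 (volume.restrict ω))
    (κ : ℝ) (hκ : 0 < κ)
    (u : H)
    (hu : ∀ v : H,
      (∫ y in ω, ∑ α : Fin 2, ∑ β : Fin 2, pd2 α β (ι u) y * pd2 α β (ι v) y)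
          - (1 / κ) * ∫ y in ω, negPartF (fun x => ι u x - θ x) y * ι v y
        = ∫ y in ω, f y * ι v y) :
    ‖u‖ ≤ cP ^ 2 * Real.sqrt (∫ y in ω, (f y) ^ 2) ∧
    Real.sqrt (∫ y in ω, (negPartF (fun x => ι u x - θ x) y) ^ 2)
      ≤ cP * Real.sqrt (∫ y in ω, (f y) ^ 2) * Real.sqrt κ := by
  have hθm : AEStronglyMeasurable θ (volume.restrict ω) :=
    (hθ.mono subset_closure).aestronglyMeasurable hω.measurableSet
  have hθ0 : ∀ᵐ y ∂(volume.restrict ω), θ y ≤ 0 :=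
    (ae_restrict_iff' hω.measurableSet).2 <|
      ae_of_all _ fun y hy => (hθneg y (subset_closure hy)).le
  have hload := (integral_mul_le_sqrt_mul_sqrt hf (hL2 u)).trans
    (mul_le_mul_of_nonneg_left (hL2le u) (sqrt_nonneg _))
  have henergy := hu u
  simp only [← sq] at henergy
  refine le_and_sqrt_le_of_energy_le (norm_nonneg u)
    (integral_nonneg fun y => by positivity) (integral_nonneg fun y => sq_nonneg _)
    (sqrt_nonneg _) hcP hκ (hPF u) ?_
  have hpenalty := div_le_div_of_nonneg_right
    (integral_neg_min_sub_zero_mul_le (hL2 u) hθm hθ0) hκ.le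
  rw [neg_div] at hpenalty
  simp only [negPartF, one_div_mul_eq_div] at henergy ⊢
  linarith

/-- energy estimates for the penalized problem: if `u_κ` solves
`∫_ω ∂_{αβ}u_κ ∂_{αβ}v − (1/κ)∫_ω {u_κ−θ}⁻ v = ∫_ω f v` for all `v ∈ H²₀(ω)`, then
`‖u_κ‖_{H²₀(ω)} ≤ c_P² ‖f‖_{L²(ω)}` and `‖{u_κ−θ}⁻‖_{L²(ω)} ≤ c_P ‖f‖_{L²(ω)} √κ`,
where `c_P` is the Poincaré–Friedrichs constant (`‖v‖ ≤ c_P |v|_{H²₀}`); in particular the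
family `{u_κ}` is bounded in `H²₀(ω)` uniformly in `κ`.  The Hilbert space `H` plays the role
of `H²₀(ω)` (realized as functions via `ι`). -/
theorem stmt_6
    (ω : Set E2) (hω : IsOpen ω) (hbd : Bornology.IsBounded ω)
    (H : Type*) [NormedAddCommGroup H] [InnerProductSpace ℝ H] [CompleteSpace H]
    (ι : H →ₗ[ℝ] (E2 → ℝ))
    (hL2 : ∀ v : H, MemLp (ι v) 2 (volume.restrict ω))
    (hL2le : ∀ v : H, Real.sqrt (∫ y in ω, (ι v y) ^ 2) ≤ ‖v‖)
    (cP : ℝ) (hcP : 0 < cP)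
    (hPF : ∀ v : H, ‖v‖ ≤ cP *
      Real.sqrt (∫ y in ω, ∑ α : Fin 2, ∑ β : Fin 2, (pd2 α β (ι v) y) ^ 2))
    (θ : E2 → ℝ) (hθ : ContinuousOn θ (closure ω)) (hθneg : ∀ y ∈ closure ω, θ y < 0)
    (f : E2 → ℝ) (hf : MemLp f 2 (volume.restrict ω))
    (κ : ℝ) (hκ : 0 < κ)
    (u : H)
    (hu : ∀ v : H,
      (∫ y in ω, ∑ α : Fin 2, ∑ β : Fin 2, pd2 α β (ι u) y * pd2 α β (ι v) y)
          - (1 / κ) * ∫ y in ω, negPartF (fun x => ι u x - θ x) y * ι v y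
        = ∫ y in ω, f y * ι v y) :
    ‖u‖ ≤ cP ^ 2 * Real.sqrt (∫ y in ω, (f y) ^ 2) ∧
    Real.sqrt (∫ y in ω, (negPartF (fun x => ι u x - θ x) y) ^ 2)
      ≤ cP * Real.sqrt (∫ y in ω, (f y) ^ 2) * Real.sqrt κ :=
  stmt_6_general ω hω H ι hL2 hL2le cP hcP hPF θ hθ hθneg f hf κ hκ u hu
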